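/- Let I and A be finite nonempty types, let P : I → ℝ be a probability mass function on I, and for each μ ∈ I let p_μ : A → ℝ be an everywhere-positive probability mass function on A. Let Q̄ : A → ℝ, γ ∈ ℝ, and α ≥ 0. For each μ ∈ I define y_μ(a) = γ·Q̄(a) − α·log p_μ(a), Y(μ) = Σ_{a∈A} p_μ(a)·y_μ(a), M(μ) = max_{a∈A} |y_μ(a)|, and D_{η,μ} = D_KL(p_η‖p_μ). Then the variance of Y satisfies Σ_{μ} P(μ)·(Y(μ) − Σ_{η} P(η)·Y(η))² ≤ Σ_{μ} P(μ)·( Σ_{η} P(η)·( M(μ)·√(2·D_{η,μ}) + α·D_{η,μ} ) )². -/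

import Mathlib

/-- Kullback–Leibler divergence (natural log) between two PMFs on a finite type. -/
noncomputable def KLdiv {A : Type*} [Fintype A] (q p : A → ℝ) : ℝ :=
  ∑ a, q a * Real.log (q a / p a)

/-!
The soft value `Y μ = ∑ₐ p_μ(a) (γ Q̄(a) − α log p_μ(a))` satisfies the exact identity
`Y μ − Y η = ∑ₐ (p_μ(a) − p_η(a)) y_μ(a) + α D_KL(p_η‖p_μ)`, because `y_η − y_μ = −α log (p_η/p_μ)`.
The first term is at most `M μ ‖p_η − p_μ‖₁ ≤ M μ √(2 D_KL(p_η‖p_μ))` by Pinsker's inequality, and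
averaging `|Y μ − Y η|` over `η ∼ P` bounds the deviation of `Y μ` from its mean.

Pinsker's inequality is proved by weighted Cauchy–Schwarz (Sedrakyan's lemma) with weights
`(q + 2p)/3` from the pointwise bound `3 (x − 1)² ≤ 2 (x + 2) klFun x`, a first-derivative test.
-/

open Real Finset InformationTheory

lemma monotoneOn_add_one_mul_log_sub :
    MonotoneOn (fun x : ℝ => (x + 1) * log x - 2 * (x - 1)) (Set.Ioi 0) := by
  have hderiv : ∀ x ∈ Set.Ioi (0 : ℝ),
      HasDerivAt (fun x : ℝ => (x + 1) * log x - 2 * (x - 1)) (log x - (1 - x⁻¹)) x := by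
    intro x hx
    have hx0 : x ≠ 0 := ne_of_gt hx
    refine ((((hasDerivAt_id x).add_const 1).mul (hasDerivAt_log hx0)).sub
      (((hasDerivAt_id x).sub_const 1).const_mul 2)).congr_deriv ?_
    simp only [id]
    field_simp
    ring
  refine monotoneOn_of_hasDerivWithinAt_nonneg (convex_Ioi 0)
    (fun x hx => (hderiv x hx).continuousAt.continuousWithinAt)
    (fun x hx => (hderiv x (interior_subset hx)).hasDerivWithinAt) fun x hx => ?_
  rw [interior_Ioi] at hx
  linarith [one_sub_inv_le_log_of_pos hx]

lemma three_mul_sq_sub_one_le_klFun {x : ℝ} (hx : 0 < x) :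
    3 * (x - 1) ^ 2 ≤ 2 * (x + 2) * klFun x := by
  set h : ℝ → ℝ := fun x => (x + 1) * log x - 2 * (x - 1)
  set g : ℝ → ℝ := fun x => 2 * (x + 2) * klFun x - 3 * (x - 1) ^ 2
  have hderiv : ∀ z ∈ Set.Ioi (0 : ℝ), HasDerivAt g (4 * h z) z := by
    intro z hz
    refine ((((hasDerivAt_id z).add_const 2).const_mul 2 |>.mul
      (hasDerivAt_klFun (ne_of_gt hz))).sub
      (((hasDerivAt_id z).sub_const 1).pow 2 |>.const_mul 3)).congr_deriv ?_
    simp only [h, klFun_apply, id]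
    ring
  have hdiff : DifferentiableOn ℝ g (Set.Ioi 0) :=
    fun z hz => (hderiv z hz).differentiableAt.differentiableWithinAt
  have hderiv_eq : ∀ z ∈ Set.Ioi (0 : ℝ), deriv g z = 4 * h z := fun z hz => (hderiv z hz).deriv
  have h_one : h 1 = 0 := by simp [h]
  have hmin : IsMinOn g (Set.Ioi 0) 1 := by
    refine isMinOn_Ioi_of_deriv (hderiv 1 (Set.mem_Ioi.2 one_pos)).continuousAt
      (hdiff.mono Set.Ioo_subset_Ioi_self) (hdiff.mono (Set.Ioi_subset_Ioi zero_le_one))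
      (fun z hz => ?_) fun z hz => ?_
    · rw [hderiv_eq z hz.1]
      linarith [monotoneOn_add_one_mul_log_sub hz.1 (Set.mem_Ioi.2 one_pos) hz.2.le]
    · have hz0 : (0 : ℝ) < z := one_pos.trans hz
      rw [hderiv_eq z hz0]
      linarith [monotoneOn_add_one_mul_log_sub (Set.mem_Ioi.2 one_pos) hz0 (le_of_lt hz)]
  have := isMinOn_iff.1 hmin x hx
  simp only [g, klFun_one] at this
  linarith

lemma sq_sub_div_le_mul_klFun {q p : ℝ} (hq : 0 < q) (hp : 0 < p) :
    (q - p) ^ 2 / ((q + 2 * p) / 3) ≤ 2 * (p * klFun (q / p)) := by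
  have hscaled : 3 * (q - p) ^ 2 ≤ 2 * (q + 2 * p) * (p * klFun (q / p)) :=
    calc 3 * (q - p) ^ 2 = p ^ 2 * (3 * (q / p - 1) ^ 2) := by field_simp
      _ ≤ p ^ 2 * (2 * (q / p + 2) * klFun (q / p)) :=
        mul_le_mul_of_nonneg_left (three_mul_sq_sub_one_le_klFun (div_pos hq hp)) (sq_nonneg p)
      _ = 2 * (q + 2 * p) * (p * klFun (q / p)) := by field_simp
  rw [div_le_iff₀ (by positivity)]
  linarith

section KLdiv

variable {A : Type*} [Fintype A] {q p : A → ℝ}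

lemma KLdiv_eq_sum_mul_klFun (hp : ∀ a, 0 < p a) (hsum : ∑ a, q a = ∑ a, p a) :
    KLdiv q p = ∑ a, p a * klFun (q a / p a) := by
  have hterm : ∀ a, p a * klFun (q a / p a) = q a * log (q a / p a) + (p a - q a) := by
    intro a
    have := (hp a).ne'
    rw [klFun_apply]
    field_simp
    ring
  simp only [hterm, sum_add_distrib, sum_sub_distrib, hsum, sub_self, add_zero, KLdiv]

lemma KLdiv_nonneg (hq : ∀ a, 0 ≤ q a) (hp : ∀ a, 0 < p a) (hsum : ∑ a, q a = ∑ a, p a) :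
    0 ≤ KLdiv q p := by
  rw [KLdiv_eq_sum_mul_klFun hp hsum]
  exact sum_nonneg fun a _ => mul_nonneg (hp a).le (klFun_nonneg (div_nonneg (hq a) (hp a).le))

/-- Pinsker's inequality. -/
theorem sq_sum_abs_sub_le_two_mul_KLdiv (hq : ∀ a, 0 < q a) (hp : ∀ a, 0 < p a)
    (hq1 : ∑ a, q a = 1) (hp1 : ∑ a, p a = 1) :
    (∑ a, |q a - p a|) ^ 2 ≤ 2 * KLdiv q p := by
  have hw : ∑ a, (q a + 2 * p a) / 3 = 1 := by
    rw [← sum_div, sum_add_distrib, ← mul_sum, hq1, hp1]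
    norm_num
  calc (∑ a, |q a - p a|) ^ 2
      = (∑ a, |q a - p a|) ^ 2 / ∑ a, (q a + 2 * p a) / 3 := by rw [hw, div_one]
    _ ≤ ∑ a, |q a - p a| ^ 2 / ((q a + 2 * p a) / 3) :=
      sq_sum_div_le_sum_sq_div _ _ fun a _ => by linarith [hq a, hp a]
    _ ≤ ∑ a, 2 * (p a * klFun (q a / p a)) :=
      sum_le_sum fun a _ => by rw [sq_abs]; exact sq_sub_div_le_mul_klFun (hq a) (hp a)
    _ = 2 * KLdiv q p := by
      rw [← mul_sum, KLdiv_eq_sum_mul_klFun hp (hq1.trans hp1.symm)]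

lemma sum_abs_sub_le_sqrt_two_mul_KLdiv (hq : ∀ a, 0 < q a) (hp : ∀ a, 0 < p a)
    (hq1 : ∑ a, q a = 1) (hp1 : ∑ a, p a = 1) :
    ∑ a, |q a - p a| ≤ √(2 * KLdiv q p) :=
  (le_abs_self _).trans (abs_le_sqrt (sq_sum_abs_sub_le_two_mul_KLdiv hq hp hq1 hp1))

end KLdiv

section SoftValue

variable {A : Type*} [Fintype A]

lemma sum_mul_sub_log_sub_sum_mul_sub_log (c : A → ℝ) (α : ℝ) {q p : A → ℝ}
    (hq : ∀ a, 0 < q a) (hp : ∀ a, 0 < p a) :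
    ∑ a, p a * (c a - α * log (p a)) - ∑ a, q a * (c a - α * log (q a))
      = ∑ a, (p a - q a) * (c a - α * log (p a)) + α * KLdiv q p := by
  rw [KLdiv, mul_sum, ← sum_sub_distrib, ← sum_add_distrib]
  refine sum_congr rfl fun a _ => ?_
  rw [log_div (hq a).ne' (hp a).ne']
  ring

lemma abs_sum_sub_mul_le {f : A → ℝ} {M : ℝ} (hM : ∀ a, |f a| ≤ M) (q p : A → ℝ) :
    |∑ a, (p a - q a) * f a| ≤ M * ∑ a, |q a - p a| := by
  rw [mul_sum]
  refine (abs_sum_le_sum_abs _ _).trans (sum_le_sum fun a _ => ?_)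
  rw [abs_mul, abs_sub_comm, mul_comm]
  exact mul_le_mul_of_nonneg_right (hM a) (abs_nonneg _)

lemma abs_sum_mul_sub_log_sub_le [Nonempty A] (c : A → ℝ) {α M : ℝ} (hα : 0 ≤ α)
    {q p : A → ℝ} (hq : ∀ a, 0 < q a) (hp : ∀ a, 0 < p a)
    (hq1 : ∑ a, q a = 1) (hp1 : ∑ a, p a = 1) (hM : ∀ a, |c a - α * log (p a)| ≤ M) :
    |∑ a, p a * (c a - α * log (p a)) - ∑ a, q a * (c a - α * log (q a))|
      ≤ M * √(2 * KLdiv q p) + α * KLdiv q p := by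
  have hM₀ : 0 ≤ M := (abs_nonneg _).trans (hM (Classical.arbitrary A))
  have hKL : 0 ≤ α * KLdiv q p :=
    mul_nonneg hα (KLdiv_nonneg (fun a => (hq a).le) hp (hq1.trans hp1.symm))
  rw [sum_mul_sub_log_sub_sum_mul_sub_log c α hq hp]
  calc |∑ a, (p a - q a) * (c a - α * log (p a)) + α * KLdiv q p|
      ≤ |∑ a, (p a - q a) * (c a - α * log (p a))| + α * KLdiv q p := by
        simpa only [abs_of_nonneg hKL] using abs_add_le _ (α * KLdiv q p)
    _ ≤ M * ∑ a, |q a - p a| + α * KLdiv q p := by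
        gcongr
        exact abs_sum_sub_mul_le hM q p
    _ ≤ M * √(2 * KLdiv q p) + α * KLdiv q p := by
        gcongr
        exact sum_abs_sub_le_sqrt_two_mul_KLdiv hq hp hq1 hp1

end SoftValue

lemma sum_mul_sq_sub_sum_mul_le {I : Type*} [Fintype I] {P : I → ℝ} (hP : ∀ μ, 0 ≤ P μ)
    (hPsum : ∑ μ, P μ = 1) {Y : I → ℝ} {B : I → I → ℝ} (hB : ∀ μ η, |Y μ - Y η| ≤ B μ η) :
    ∑ μ, P μ * (Y μ - ∑ η, P η * Y η) ^ 2 ≤ ∑ μ, P μ * (∑ η, P η * B μ η) ^ 2 := by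
  refine sum_le_sum fun μ _ => mul_le_mul_of_nonneg_left ?_ (hP μ)
  have hdev : Y μ - ∑ η, P η * Y η = ∑ η, P η * (Y μ - Y η) := by
    simp only [mul_sub, sum_sub_distrib, ← sum_mul, hPsum, one_mul]
  have habs : |Y μ - ∑ η, P η * Y η| ≤ ∑ η, P η * B μ η := by
    rw [hdev]
    refine (abs_sum_le_sum_abs _ _).trans (sum_le_sum fun η _ => ?_)
    rw [abs_mul, abs_of_nonneg (hP η)]
    exact mul_le_mul_of_nonneg_left (hB μ η) (hP η)
  rw [← sq_abs]
  exact pow_le_pow_left₀ (abs_nonneg _) habs 2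

theorem stmt_8_general {I A : Type*} [Fintype I] [Fintype A] [Nonempty A]
    (P : I → ℝ) (hP : ∀ μ, 0 ≤ P μ) (hPsum : ∑ μ, P μ = 1)
    (p : I → A → ℝ) (hp : ∀ μ a, 0 < p μ a) (hpsum : ∀ μ, ∑ a, p μ a = 1)
    (Qbar : A → ℝ) (γ α : ℝ) (hα : 0 ≤ α)
    (y : I → A → ℝ) (Y M : I → ℝ) (D : I → I → ℝ)
    (hy : ∀ μ a, y μ a = γ * Qbar a - α * Real.log (p μ a))
    (hY : ∀ μ, Y μ = ∑ a, p μ a * y μ a)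
    (hM : ∀ μ, M μ = Finset.univ.sup' Finset.univ_nonempty fun a => |y μ a|)
    (hD : ∀ η μ, D η μ = KLdiv (p η) (p μ)) :
    ∑ μ, P μ * (Y μ - ∑ η, P η * Y η) ^ 2
      ≤ ∑ μ, P μ * (∑ η, P η * (M μ * Real.sqrt (2 * D η μ) + α * D η μ)) ^ 2 := by
  refine sum_mul_sq_sub_sum_mul_le hP hPsum fun μ η => ?_
  have hyM : ∀ a, |γ * Qbar a - α * log (p μ a)| ≤ M μ := fun a => by
    rw [hM, ← hy]
    exact le_sup' (fun a => |y μ a|) (mem_univ a)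
  simp only [hY, hy, hD]
  exact abs_sum_mul_sub_log_sub_le (fun a => γ * Qbar a) hα (hp η) (hp μ) (hpsum η) (hpsum μ) hyM

/-- Proposition 3 of the paper, single-sample form: with
`y_μ a = γ·Q̄ a − α·log (p_μ a)`, `Y μ = ∑_a p_μ a · y_μ a`,
`M μ = max_a |y_μ a|` and `D_{η,μ} = D_KL(p_η‖p_μ)`, the variance of `Y` under
`P` is bounded by `∑_μ P μ · (∑_η P η · (M μ·√(2·D_{η,μ}) + α·D_{η,μ}))²`. -/
theorem stmt_8 {I A : Type*} [Fintype I] [Nonempty I] [Fintype A] [Nonempty A]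
    (P : I → ℝ) (hP : ∀ μ, 0 ≤ P μ) (hPsum : ∑ μ, P μ = 1)
    (p : I → A → ℝ) (hp : ∀ μ a, 0 < p μ a) (hpsum : ∀ μ, ∑ a, p μ a = 1)
    (Qbar : A → ℝ) (γ α : ℝ) (hα : 0 ≤ α)
    (y : I → A → ℝ) (Y M : I → ℝ) (D : I → I → ℝ)
    (hy : ∀ μ a, y μ a = γ * Qbar a - α * Real.log (p μ a))
    (hY : ∀ μ, Y μ = ∑ a, p μ a * y μ a)
    (hM : ∀ μ, M μ = Finset.univ.sup' Finset.univ_nonempty fun a => |y μ a|)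
    (hD : ∀ η μ, D η μ = KLdiv (p η) (p μ)) :
    ∑ μ, P μ * (Y μ - ∑ η, P η * Y η) ^ 2
      ≤ ∑ μ, P μ * (∑ η, P η * (M μ * Real.sqrt (2 * D η μ) + α * D η μ)) ^ 2 :=
  stmt_8_general P hP hPsum p hp hpsum Qbar γ α hα y Y M D hy hY hM hD
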